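/- arXiv:2011.07621 — 5 statements merged into one kernel-verified Lean document; each statement's English description precedes it below -/
import Mathlib

section
/- Let G be the digraph with vertex set V = {u, v, w} and edge set E = {(u,v), (v,v), (u,w), (w,w)}. Then the associative spectrum of the graph algebra A(G) satisfies s_n(A(G)) = 2^{n−2} for all n ≥ 2. -/
namespace AssocSpec

/-- Bracketings of products `x₁ x₂ ⋯ xₙ` represented as binary trees whose
leaves, read from left to right, are the variables `x₁, …, xₙ`. -/
inductive BTree : Type
  | leaf : BTree
  | node : BTree → BTree → BTree

namespace BTree

/-- The size of a bracketing: its number of variables (leaves). -/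
def size : BTree → ℕ
  | leaf => 1
  | node l r => l.size + r.size

/-- Evaluate a bracketing in a magma `(A, op)`, the leaves taking the values
`f k, f (k+1), …` from left to right. -/
def evalFrom {A : Type*} (op : A → A → A) : BTree → (ℕ → A) → ℕ → A
  | leaf, f, k => f k
  | node l r, f, k => op (evalFrom op l f k) (evalFrom op r f (k + l.size))

/-- The term operation induced by a bracketing `t` on a magma `(A, op)`;
the `i`-th variable (0-indexed) takes the value `f i`. -/
def termOp {A : Type*} (op : A → A → A) (t : BTree) (f : ℕ → A) : A :=
  evalFrom op t f 0

/-- The depth sequence of the DFS tree `G(t)` of a bracketing `t`: the `i`-th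
entry is the depth of the `i`-th variable (0-indexed) in `G(t)`. -/
def depths : BTree → List ℕ
  | leaf => [0]
  | node l r => l.depths ++ r.depths.map (· + 1)

/-- The depth of the `i`-th variable (0-indexed) in the DFS tree `G(t)`. -/
def depth (t : BTree) (i : ℕ) : ℕ := t.depths.getD i 0

/-- The height of the DFS tree `G(t)`: the maximum depth of a variable. -/
def height (t : BTree) : ℕ := t.depths.foldr max 0

/-- The edges of the DFS tree `G(t)`, the variables being indexed from the
given offset: `(p, c)` is an edge iff `x_p` is the parent of `x_c`. -/
def edgesFrom : BTree → ℕ → List (ℕ × ℕ)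
  | leaf, _ => []
  | node l r, k => (k, k + l.size) :: (l.edgesFrom k ++ r.edgesFrom (k + l.size))

/-- The edges of the DFS tree `G(t)` (variables indexed from `0`). -/
def edges (t : BTree) : List (ℕ × ℕ) := t.edgesFrom 0

end BTree

open Classical in
/-- The operation of the graph algebra of the digraph with vertex set `V` and
edge relation `E`; `none` plays the role of `∞`. -/
noncomputable def gaOp {V : Type*} (E : V → V → Prop) :
    Option V → Option V → Option V
  | some x, some y => if E x y then some x else none
  | _, _ => none

/-- The magma `(A, op)` satisfies the bracketing identity `t ≈ t'`. -/
def Satisfies {A : Type*} (op : A → A → A) (t t' : BTree) : Prop :=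
  ∀ f : ℕ → A, BTree.termOp op t f = BTree.termOp op t' f

/-- The `n`-th member `s_n` of the associative spectrum of the magma `(A, op)`:
the number of distinct term operations induced by bracketings of size `n`. -/
noncomputable def spectrum {A : Type*} (op : A → A → A) (n : ℕ) : ℕ :=
  Set.ncard {g : (ℕ → A) → A | ∃ t : BTree, t.size = n ∧ g = BTree.termOp op t}

/-- Reachability (by a walk) in the digraph with edge relation `E`. -/
def Reach {V : Type*} (E : V → V → Prop) : V → V → Prop :=
  Relation.ReflTransGen E

/-- `u` and `v` lie in the same strongly connected component. -/
def SameSCC {V : Type*} (E : V → V → Prop) (u v : V) : Prop :=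
  Reach E u v ∧ Reach E v u

/-- The strongly connected component of `v`, as a set of vertices. -/
def scc {V : Type*} (E : V → V → Prop) (v : V) : Set V :=
  {u | SameSCC E u v}

/-- `v` lies in a nontrivial strongly connected component (one carrying at
least one edge), i.e. `v` lies on a closed walk of positive length. -/
def InNontrivialSCC {V : Type*} (E : V → V → Prop) (v : V) : Prop :=
  ∃ u, E v u ∧ Reach E u v

/-- The induced subgraph on the set `K` (with the edge relation `E`) is an
`m`-whirl: `K` is partitioned into blocks `B 0, …, B (m-1)` so that edges go
exactly from each block to the cyclically next one. -/
def IsWhirlOn {V : Type*} (E : V → V → Prop) (K : Set V) (m : ℕ) : Prop :=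
  ∃ B : ZMod m → Set V,
    (∀ i, (B i).Nonempty) ∧
    (∀ i, B i ⊆ K) ∧
    (∀ x ∈ K, ∃! i, x ∈ B i) ∧
    (∀ x ∈ K, ∀ y ∈ K, (E x y ↔ ∃ i, x ∈ B i ∧ y ∈ B (i + 1)))

/-- `p 0 → p 1 → ⋯ → p len` is a path (a walk with pairwise distinct
vertices) in the digraph with edge relation `E`. -/
def IsPath {V : Type*} (E : V → V → Prop) (len : ℕ) (p : ℕ → V) : Prop :=
  (∀ i < len, E (p i) (p (i + 1))) ∧
  (∀ i ≤ len, ∀ j ≤ len, p i = p j → i = j)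

/-- The walk `p 0 → ⋯ → p len` is pleasant: all its vertices belong to
trivial strongly connected components. -/
def IsPleasant {V : Type*} (E : V → V → Prop) (len : ℕ) (p : ℕ → V) : Prop :=
  ∀ i ≤ len, ¬ InNontrivialSCC E (p i)

/-- The connected component `K` (of an undirected graph) is complete
bipartite: it splits into two nonempty parts with edges exactly between
vertices of different parts. -/
def IsCompleteBipartiteOn {V : Type*} (E : V → V → Prop) (K : Set V) : Prop :=
  ∃ B1 B2 : Set V, B1.Nonempty ∧ B2.Nonempty ∧ B1 ∪ B2 = K ∧ B1 ∩ B2 = ∅ ∧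
    ∀ x ∈ K, ∀ y ∈ K, (E x y ↔ (x ∈ B1 ∧ y ∈ B2) ∨ (x ∈ B2 ∧ y ∈ B1))

/-- A DFS tree of size `n`: a rooted directed tree on the vertices
`x₁, …, xₙ` (here `Fin n`, the root being `0`), given by its parent function,
such that the parent of every non-root vertex precedes it and the vertex set
of the induced subtree rooted at any vertex `i` is an interval `[i, i']`.
(The parent of the root is, by convention, the root itself.) -/
structure DFSTree (n : ℕ) where
  parent : Fin n → Fin n
  parent_lt : ∀ i : Fin n, 0 < (i : ℕ) → (parent i : ℕ) < (i : ℕ)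
  parent_root : ∀ i : Fin n, (i : ℕ) = 0 → parent i = i
  interval : ∀ i j k : Fin n, i ≤ j → j ≤ k →
    (∃ a : ℕ, parent^[a] k = i) → (∃ a : ℕ, parent^[a] j = i)

/-- The depth of the vertex `i` in a DFS tree: the length of the path from
the root to `i`. -/
noncomputable def DFSTree.depth {n : ℕ} (T : DFSTree n) (i : Fin n) : ℕ :=
  sInf {k : ℕ | (T.parent^[k] i : ℕ) = 0}

/-- The height of a DFS tree: the maximum depth of a vertex. -/
noncomputable def DFSTree.height {n : ℕ} (T : DFSTree n) : ℕ :=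
  Finset.univ.sup fun i => T.depth i

/-- The vertex `i` is a leaf (childless vertex) of the DFS tree `T`. -/
def DFSTree.IsLeaf {n : ℕ} (T : DFSTree n) (i : Fin n) : Prop :=
  ∀ j : Fin n, T.parent j = i → j = i

/-- `t_h(n)`: the number of DFS trees of size `n` of height at most `h`. -/
noncomputable def tcount (h n : ℕ) : ℕ :=
  Nat.card {T : DFSTree n // T.height ≤ h}

/-- `d` is a zag sequence: `d₁ = 0`, `d₂ = 1`, and
`1 ≤ d_{i+1} ≤ d_i + 1` for all `i` (1-indexed as in the paper;
here `d : Fin n → ℕ` is 0-indexed). -/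
def IsZag {n : ℕ} (d : Fin n → ℕ) : Prop :=
  (∀ h : 0 < n, d ⟨0, h⟩ = 0) ∧
  (∀ h : 1 < n, d ⟨1, h⟩ = 1) ∧
  (∀ i : ℕ, ∀ h : i + 1 < n,
    1 ≤ d ⟨i + 1, h⟩ ∧ d ⟨i + 1, h⟩ ≤ d ⟨i, Nat.lt_of_succ_lt h⟩ + 1)

/-- `M(t,t')`: the largest `m` such that the depth sequences of the DFS trees
of the bracketings `t` and `t'` are congruent modulo `m`. -/
noncomputable def Mval (t t' : BTree) : ℕ :=
  sSup {m : ℕ | ∀ i < t.size, t.depth i ≡ t'.depth i [MOD m]}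

end AssocSpec
namespace AssocSpec8

open AssocSpec AssocSpec.BTree Classical

abbrev A3 := Option (Fin 3)

def E3 : Fin 3 → Fin 3 → Prop := fun i j =>
  (i = 0 ∧ j = 1) ∨ (i = 1 ∧ j = 1) ∨ (i = 0 ∧ j = 2) ∨ (i = 2 ∧ j = 2)

noncomputable def op3 : A3 → A3 → A3 := gaOp E3

lemma op3_none_left (y : A3) : op3 none y = none := by cases y <;> rfl

lemma op3_none_right (x : A3) : op3 x none = none := by cases x <;> rfl

lemma op3_some_some (x y : Fin 3) :
    op3 (some x) (some y) = if E3 x y then some x else none := rfl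

lemma op3_val (a b : A3) : op3 a b = none ∨ op3 a b = a := by
  cases a with
  | none => exact Or.inl (op3_none_left b)
  | some x =>
    cases b with
    | none => exact Or.inl (op3_none_right _)
    | some y =>
      rw [op3_some_some]
      by_cases h : E3 x y
      · exact Or.inr (if_pos h)
      · exact Or.inl (if_neg h)

lemma op3_vw (c : Fin 3) (hc : c = 1 ∨ c = 2) (y : A3) :
    op3 (some c) y = if y = some c then some c else none := by
  rcases hc with rfl | rfl <;> rcases y with _ | d
  · rw [op3_none_right, if_neg (by simp)]
  · rw [op3_some_some]; fin_cases d <;> simp [E3]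
  · rw [op3_none_right, if_neg (by simp)]
  · rw [op3_some_some]; fin_cases d <;> simp [E3]

lemma op3_u (y : A3) :
    op3 (some 0) y = if y = some 1 ∨ y = some 2 then some 0 else none := by
  rcases y with _ | d
  · rw [op3_none_right, if_neg (by simp)]
  · rw [op3_some_some]; fin_cases d <;> simp [E3]

lemma size_pos (t : BTree) : 0 < t.size := by
  induction t with
  | leaf => exact Nat.one_pos
  | node l r ihl ihr => rw [size]; omega

def constB (f : ℕ → A3) (m sz : ℕ) : Prop :=
  (f m = some 1 ∨ f m = some 2) ∧ ∀ i < sz, f (m + i) = f m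

def blocksOK : BTree → (ℕ → A3) → ℕ → Prop
  | .leaf, _, _ => True
  | .node l r, f, k => blocksOK l f k ∧ constB f (k + l.size) r.size

lemma eval_none (t : BTree) (f : ℕ → A3) (k : ℕ) (h : f k = none) :
    evalFrom op3 t f k = none := by
  induction t generalizing k with
  | leaf => rw [evalFrom]; exact h
  | node l r ihl ihr => rw [evalFrom, ihl k h, op3_none_left]

lemma eval_val (t : BTree) (f : ℕ → A3) (k : ℕ) :
    evalFrom op3 t f k = none ∨ evalFrom op3 t f k = f k := by
  induction t generalizing k with
  | leaf => exact Or.inr rfl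
  | node l r ihl ihr =>
    rw [evalFrom]
    rcases ihl k with h | h
    · rw [h, op3_none_left]; exact Or.inl rfl
    · rw [h]; exact op3_val _ _

lemma eval_vw (t : BTree) (f : ℕ → A3) (k : ℕ) (c : Fin 3) (hc : c = 1 ∨ c = 2)
    (h : f k = some c) :
    evalFrom op3 t f k = if ∀ i < t.size, f (k + i) = some c then some c else none := by
  induction t generalizing k with
  | leaf =>
    rw [evalFrom, if_pos, h]
    intro i hi
    have : i = 0 := by simpa [size] using hi
    subst this; simpa using h
  | node l r ihl ihr =>
    rw [evalFrom, ihl k h]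
    by_cases Hl : ∀ i < l.size, f (k + i) = some c
    · rw [if_pos Hl, op3_vw c hc]
      have hm0 : k + l.size < k + (node l r).size := by
        have := size_pos r; rw [size]; omega
      by_cases Hm : f (k + l.size) = some c
      · rw [ihr (k + l.size) Hm]
        by_cases Hr : ∀ i < r.size, f (k + l.size + i) = some c
        · rw [if_pos Hr, if_pos rfl, if_pos]
          intro i hi
          rw [size] at hi
          by_cases hil : i < l.size
          · exact Hl i hil
          · have : i = l.size + (i - l.size) := by omega
            rw [this, ← Nat.add_assoc]
            exact Hr (i - l.size) (by omega)
        · rw [if_neg Hr, if_neg (by simp), if_neg]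
          intro H
          apply Hr
          intro i hi
          have := H (l.size + i) (by rw [size]; omega)
          rwa [← Nat.add_assoc] at this
      · have hne : evalFrom op3 r f (k + l.size) ≠ some c := by
          rcases eval_val r f (k + l.size) with he | he <;> rw [he]
          · simp
          · exact Hm
        rw [if_neg hne, if_neg]
        intro H
        exact Hm (by simpa using H l.size (by rw [size] at hm0 ⊢; omega))
    · rw [if_neg Hl, op3_none_left, if_neg]
      intro H
      apply Hl
      intro i hi
      exact H i (by rw [size]; omega)

lemma eval_u (t : BTree) (f : ℕ → A3) (k : ℕ) (h : f k = some 0) :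
    evalFrom op3 t f k = if blocksOK t f k then some 0 else none := by
  induction t generalizing k with
  | leaf =>
    rw [evalFrom, if_pos (show blocksOK .leaf f k from trivial)]; exact h
  | node l r ihl ihr =>
    rw [evalFrom, ihl k h]
    by_cases Hl : blocksOK l f k
    · rw [if_pos Hl, op3_u]
      by_cases Hc : constB f (k + l.size) r.size
      · obtain ⟨h1, h2⟩ := Hc
        have hr : evalFrom op3 r f (k + l.size) = f (k + l.size) := by
          rcases h1 with hv | hv <;>
          · rw [eval_vw r f _ _ (by simp) hv, if_pos fun i hi => (h2 i hi).trans hv, hv]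
        rw [hr, if_pos h1, if_pos ⟨Hl, ⟨h1, h2⟩⟩]
      · rw [if_neg, if_neg (fun hh => Hc hh.2)]
        rintro (he | he) <;>
        · have hm : f (k + l.size) = evalFrom op3 r f (k + l.size) := by
            rcases eval_val r f (k + l.size) with h' | h'
            · rw [h'] at he; exact absurd he (by simp)
            · exact h'.symm
          apply Hc
          rw [he] at hm
          refine ⟨by simp [hm], fun i hi => ?_⟩
          have := eval_vw r f (k + l.size) _ (by simp) hm
          rw [he] at this
          by_contra hne
          rw [if_neg] at this
          · exact absurd this (by simp)
          · intro H
            exact hne ((H i hi).trans hm.symm)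
    · rw [if_neg Hl, op3_none_left, if_neg (fun hh => Hl hh.1)]

def blockSizes : BTree → List ℕ
  | .leaf => []
  | .node l r => blockSizes l ++ [r.size]

def listOK : List ℕ → (ℕ → A3) → ℕ → Prop
  | [], _, _ => True
  | sz :: s, f, m => constB f m sz ∧ listOK s f (m + sz)

lemma listOK_append (s1 s2 : List ℕ) (f : ℕ → A3) (m : ℕ) :
    listOK (s1 ++ s2) f m ↔ listOK s1 f m ∧ listOK s2 f (m + s1.sum) := by
  induction s1 generalizing m with
  | nil => simp [listOK]
  | cons a tl ih =>
    rw [List.cons_append, listOK, listOK, ih, List.sum_cons, and_assoc,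
      Nat.add_assoc]

lemma sum_blockSizes (t : BTree) : (blockSizes t).sum + 1 = t.size := by
  induction t with
  | leaf => rfl
  | node l r ihl ihr =>
    rw [blockSizes, List.sum_append, List.sum_singleton, size]
    omega

lemma blockSizes_pos (t : BTree) : ∀ a ∈ blockSizes t, 0 < a := by
  induction t with
  | leaf => simp [blockSizes]
  | node l r ihl ihr =>
    intro a ha
    rw [blockSizes, List.mem_append, List.mem_singleton] at ha
    rcases ha with ha | rfl
    · exact ihl a ha
    · exact size_pos r

lemma blocksOK_iff (t : BTree) (f : ℕ → A3) (k : ℕ) :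
    blocksOK t f k ↔ listOK (blockSizes t) f (k + 1) := by
  induction t generalizing k with
  | leaf => simp [blocksOK, blockSizes, listOK]
  | node l r ihl ihr =>
    have hsum : k + 1 + (blockSizes l).sum = k + l.size := by
      have := sum_blockSizes l; omega
    rw [show blocksOK (.node l r) f k = (blocksOK l f k ∧ constB f (k + l.size) r.size) from rfl,
      blockSizes, listOK_append, ihl, hsum]
    simp [listOK]

noncomputable def Phi (s : List ℕ) (f : ℕ → A3) : A3 :=
  if f 0 = some 0 then (if listOK s f 1 then some 0 else none)
  else if (f 0 = some 1 ∨ f 0 = some 2) ∧ (∀ i < s.sum + 1, f i = f 0) then f 0 else none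

lemma A3_cases (a : A3) : a = none ∨ a = some 0 ∨ a = some 1 ∨ a = some 2 := by
  rcases a with _ | d
  · exact Or.inl rfl
  · fin_cases d
    · exact Or.inr (Or.inl rfl)
    · exact Or.inr (Or.inr (Or.inl rfl))
    · exact Or.inr (Or.inr (Or.inr rfl))

lemma termOp_eq_Phi (t : BTree) : termOp op3 t = Phi (blockSizes t) := by
  funext f
  rw [termOp, Phi, sum_blockSizes]
  rcases A3_cases (f 0) with hf | hf | hf | hf
  · rw [eval_none t f 0 hf, if_neg (by rw [hf]; simp), if_neg]
    rintro ⟨h1 | h1, -⟩ <;> rw [hf] at h1 <;> simp at h1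
  · rw [eval_u t f 0 hf, if_pos hf]
    simp only [blocksOK_iff, Nat.zero_add]
  · rw [eval_vw t f 0 1 (Or.inl rfl) hf, if_neg (show ¬(f 0 = some 0) by rw [hf]; simp), hf]
    refine if_congr ?_ rfl rfl
    constructor
    · intro H
      exact ⟨Or.inl rfl, fun i hi => by simpa using H i hi⟩
    · rintro ⟨-, H⟩ i hi
      rw [Nat.zero_add]; exact H i hi
  · rw [eval_vw t f 0 2 (Or.inr rfl) hf, if_neg (show ¬(f 0 = some 0) by rw [hf]; simp), hf]
    refine if_congr ?_ rfl rfl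
    constructor
    · intro H
      exact ⟨Or.inr rfl, fun i hi => by simpa using H i hi⟩
    · rintro ⟨-, H⟩ i hi
      rw [Nat.zero_add]; exact H i hi


def Comp (k : ℕ) : Set (List ℕ) := {s | (∀ a ∈ s, 0 < a) ∧ s.sum = k}

lemma comp_zero : Comp 0 = {([] : List ℕ)} := by
  ext s
  simp only [Comp, Set.mem_setOf_eq, Set.mem_singleton_iff]
  constructor
  · rintro ⟨hpos, hsum⟩
    cases s with
    | nil => rfl
    | cons a tl =>
      have := hpos a (by simp)
      rw [List.sum_cons] at hsum; omega
  · rintro rfl; simp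

lemma comp_one : Comp 1 = {([1] : List ℕ)} := by
  ext s
  simp only [Comp, Set.mem_setOf_eq, Set.mem_singleton_iff]
  constructor
  · rintro ⟨hpos, hsum⟩
    cases s with
    | nil => simp at hsum
    | cons a tl =>
      have ha := hpos a (by simp)
      rw [List.sum_cons] at hsum
      have ha1 : a = 1 := by omega
      have ht0 : tl.sum = 0 := by omega
      cases tl with
      | nil => rw [ha1]
      | cons b tb =>
        have := hpos b (by simp)
        rw [List.sum_cons] at ht0; omega
  · rintro rfl; exact ⟨by simp, rfl⟩

def gfun : List ℕ → List ℕ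
  | [] => []
  | a :: tl => (a + 1) :: tl

lemma comp_succ_sub (k : ℕ) :
    Comp (k + 1) ⊆ (fun s => 1 :: s) '' Comp k ∪ gfun '' Comp k := by
  rintro s ⟨hpos, hsum⟩
  cases s with
  | nil => simp at hsum
  | cons a tl =>
    rw [List.sum_cons] at hsum
    have ha := hpos a (by simp)
    by_cases h1 : a = 1
    · subst h1
      exact Or.inl ⟨tl, ⟨fun b hb => hpos b (by simp [hb]), by omega⟩, rfl⟩
    · refine Or.inr ⟨(a - 1) :: tl, ⟨?_, ?_⟩, ?_⟩
      · rintro b hb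
        rcases List.mem_cons.mp hb with rfl | hb
        · omega
        · exact hpos b (by simp [hb])
      · rw [List.sum_cons]; omega
      · show (a - 1 + 1) :: tl = a :: tl
        have : a - 1 + 1 = a := by omega
        rw [this]

lemma comp_finite (k : ℕ) : (Comp k).Finite := by
  induction k with
  | zero => rw [comp_zero]; exact Set.finite_singleton _
  | succ k ih =>
    exact Set.Finite.subset ((ih.image _).union (ih.image _)) (comp_succ_sub k)

lemma comp_nonempty_list {k : ℕ} (hk : 1 ≤ k) {s : List ℕ} (hs : s ∈ Comp k) : s ≠ [] := by
  rintro rfl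
  have := hs.2
  simp at this; omega

lemma comp_succ (k : ℕ) (hk : 1 ≤ k) :
    Comp (k + 1) = (fun s => 1 :: s) '' Comp k ∪ gfun '' Comp k := by
  apply Set.Subset.antisymm (comp_succ_sub k)
  rintro s (⟨t, ht, rfl⟩ | ⟨t, ht, rfl⟩)
  · refine ⟨?_, ?_⟩
    · rintro b hb
      rcases List.mem_cons.mp hb with rfl | hb
      · omega
      · exact ht.1 b hb
    · rw [List.sum_cons, ht.2, Nat.add_comm]
  · cases t with
    | nil => exact absurd rfl (comp_nonempty_list hk ht)
    | cons a tl =>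
      refine ⟨?_, ?_⟩
      · rintro b hb
        rcases List.mem_cons.mp (show b ∈ (a + 1) :: tl from hb) with rfl | hb'
        · omega
        · exact ht.1 b (by simp [hb'])
      · show ((a + 1) :: tl).sum = k + 1
        have := ht.2
        rw [List.sum_cons] at this ⊢
        omega

lemma comp_card (k : ℕ) : (Comp (k + 1)).ncard = 2 ^ k := by
  induction k with
  | zero => rw [comp_one, Set.ncard_singleton]; norm_num
  | succ k ih =>
    have hdisj : Disjoint ((fun s => 1 :: s) '' Comp (k + 1)) (gfun '' Comp (k + 1)) := by
      rw [Set.disjoint_left]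
      rintro x ⟨t, ht, rfl⟩ ⟨t', ht', he⟩
      cases t' with
      | nil => exact comp_nonempty_list (by omega) ht' rfl
      | cons a tl =>
        rw [show gfun (a :: tl) = (a + 1) :: tl from rfl, List.cons.injEq] at he
        have := ht'.1 a (by simp)
        omega
    have hi1 : Set.InjOn (fun s => 1 :: s) (Comp (k + 1)) := by
      intro t _ t' _ h
      simpa using h
    have hi2 : Set.InjOn gfun (Comp (k + 1)) := by
      intro t ht t' ht' h
      cases t with
      | nil => exact absurd rfl (comp_nonempty_list (by omega) ht)
      | cons a tl =>
        cases t' with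
        | nil => exact absurd rfl (comp_nonempty_list (by omega) ht')
        | cons a' tl' =>
          rw [show gfun (a :: tl) = (a + 1) :: tl from rfl,
            show gfun (a' :: tl') = (a' + 1) :: tl' from rfl, List.cons.injEq] at h
          rw [List.cons.injEq]
          exact ⟨by omega, h.2⟩
    rw [comp_succ (k + 1) (by omega),
      Set.ncard_union_eq hdisj ((comp_finite _).image _) ((comp_finite _).image _),
      Set.ncard_image_of_injOn hi1, Set.ncard_image_of_injOn hi2, ih]
    ring

lemma listOK_congr (s : List ℕ) (f g : ℕ → A3) :
    ∀ m : ℕ, (∀ a ∈ s, 0 < a) → (∀ i, m ≤ i → i < m + s.sum → f i = g i) →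
      (listOK s f m ↔ listOK s g m) := by
  induction s with
  | nil => intro m _ _; exact Iff.rfl
  | cons a tl ih =>
    intro m hpos h
    rw [List.sum_cons] at h
    have ha : 0 < a := hpos a (by simp)
    rw [listOK, listOK,
      ih (m + a) (fun b hb => hpos b (by simp [hb])) (fun i h1 h2 => h i (by omega) (by omega))]
    have hm : f m = g m := h m le_rfl (by omega)
    have hc : constB f m a ↔ constB g m a := by
      unfold constB
      rw [hm]
      constructor
      · rintro ⟨h1, h2⟩
        exact ⟨h1, fun i hi => by rw [← h (m + i) (by omega) (by omega), h2 i hi]⟩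
      · rintro ⟨h1, h2⟩
        exact ⟨h1, fun i hi => by rw [h (m + i) (by omega) (by omega), h2 i hi]⟩
    rw [hc]

lemma listOK_const2 (s : List ℕ) (f : ℕ → A3) (m : ℕ) (h : ∀ i, m ≤ i → f i = some 2) :
    listOK s f m := by
  induction s generalizing m with
  | nil => trivial
  | cons a tl ih =>
    refine ⟨⟨Or.inr (h m le_rfl), fun i _ => ?_⟩, ih (m + a) (fun i hi => h i (by omega))⟩
    rw [h (m + i) (by omega), h m le_rfl]

lemma sep {a a' : ℕ} {tl tl' : List ℕ} (m : ℕ) (hm : 1 ≤ m) (ha : 0 < a) (hlt : a < a')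
    (hyp : ∀ f : ℕ → A3, f 0 = some 0 → (listOK (a :: tl) f m ↔ listOK (a' :: tl') f m)) :
    False := by
  set f : ℕ → A3 := fun i => if i = 0 then some 0 else if i < m + a then some 1 else some 2
    with hfdef
  have hf0 : f 0 = some 0 := by simp [hfdef]
  have hfm : ∀ i, 1 ≤ i → i < m + a → f i = some 1 := by
    intro i h1 h2
    simp only [hfdef]
    rw [if_neg (by omega), if_pos h2]
  have hf2 : ∀ i, m + a ≤ i → f i = some 2 := by
    intro i h1
    simp only [hfdef]
    rw [if_neg (by omega), if_neg (by omega)]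
  have h1 : listOK (a :: tl) f m := by
    refine ⟨⟨Or.inl (hfm m hm (by omega)), fun i hi => ?_⟩,
      listOK_const2 tl f (m + a) (fun i h => hf2 i h)⟩
    rw [hfm (m + i) (by omega) (by omega), hfm m hm (by omega)]
  have h2 := (hyp f hf0).mp h1
  have h3 := h2.1.2 a hlt
  rw [hf2 (m + a) le_rfl, hfm m hm (by omega)] at h3
  simp at h3

lemma listOK_ext : ∀ (s s' : List ℕ) (m : ℕ), 1 ≤ m → (∀ a ∈ s, 0 < a) →
    (∀ a ∈ s', 0 < a) → s.sum = s'.sum →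
    (∀ f : ℕ → A3, f 0 = some 0 → (listOK s f m ↔ listOK s' f m)) → s = s' := by
  intro s
  induction s with
  | nil =>
    intro s' m hm hp hp' hsum hyp
    cases s' with
    | nil => rfl
    | cons a tl =>
      have := hp' a (by simp)
      rw [List.sum_nil, List.sum_cons] at hsum
      omega
  | cons a tl ih =>
    intro s' m hm hp hp' hsum hyp
    cases s' with
    | nil =>
      have := hp a (by simp)
      rw [List.sum_nil, List.sum_cons] at hsum
      omega
    | cons a' tl' =>
      have ha := hp a (by simp)
      have ha' := hp' a' (by simp)
      have haa : a = a' := by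
        rcases Nat.lt_trichotomy a a' with h | h | h
        · exact (sep m hm ha h hyp).elim
        · exact h
        · exact (sep m hm ha' h (fun f hf => (hyp f hf).symm)).elim
      subst haa
      rw [List.sum_cons, List.sum_cons] at hsum
      have htl : tl = tl' := by
        apply ih tl' (m + a) (by omega) (fun b hb => hp b (by simp [hb]))
          (fun b hb => hp' b (by simp [hb])) (by omega)
        intro f hf
        set g : ℕ → A3 := fun i => if i = 0 then some 0 else if i < m + a then some 1 else f i
          with hgdef
        have hg0 : g 0 = some 0 := by simp [hgdef]
        have hagree : ∀ i, m + a ≤ i → g i = f i := by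
          intro i hi
          simp only [hgdef]
          rw [if_neg (by omega), if_neg (by omega)]
        have hgm : ∀ i, 1 ≤ i → i < m + a → g i = some 1 := by
          intro i h1 h2
          simp only [hgdef]
          rw [if_neg (by omega), if_pos h2]
        have hcg : constB g m a :=
          ⟨Or.inl (hgm m hm (by omega)), fun i hi => by
            rw [hgm (m + i) (by omega) (by omega), hgm m hm (by omega)]⟩
        have e1 : listOK tl f (m + a) ↔ listOK tl g (m + a) :=
          listOK_congr tl f g (m + a) (fun b hb => hp b (by simp [hb]))
            (fun i hi _ => (hagree i hi).symm)
        have e2 : listOK tl' f (m + a) ↔ listOK tl' g (m + a) :=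
          listOK_congr tl' f g (m + a) (fun b hb => hp' b (by simp [hb]))
            (fun i hi _ => (hagree i hi).symm)
        rw [e1, e2]
        have h3 := hyp g hg0
        rw [listOK, listOK] at h3
        constructor
        · intro h
          exact (h3.mp ⟨hcg, h⟩).2
        · intro h
          exact (h3.mpr ⟨hcg, h⟩).2
      rw [htl]

lemma Phi_injOn (k : ℕ) : Set.InjOn Phi (Comp k) := by
  intro s hs s' hs' hP
  refine listOK_ext s s' 1 le_rfl hs.1 hs'.1 (hs.2.trans hs'.2.symm) ?_
  intro f hf
  have h := congrFun hP f
  rw [Phi, Phi, if_pos hf, if_pos hf] at h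
  by_cases h1 : listOK s f 1 <;> by_cases h2 : listOK s' f 1
  · exact iff_of_true h1 h2
  · rw [if_pos h1, if_neg h2] at h; simp at h
  · rw [if_neg h1, if_pos h2] at h; simp at h
  · exact iff_of_false h1 h2

def line : ℕ → BTree
  | 0 => .leaf
  | n + 1 => .node .leaf (line n)

lemma line_size (m : ℕ) : (line m).size = m + 1 := by
  induction m with
  | zero => rfl
  | succ n ih =>
    show BTree.size .leaf + (line n).size = n + 1 + 1
    rw [ih]
    show 1 + (n + 1) = n + 1 + 1
    omega

lemma build_spec (s : List ℕ) : ∀ t : BTree, (∀ a ∈ s, 0 < a) →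
    (s.foldl (fun t a => .node t (line (a - 1))) t).size = t.size + s.sum ∧
    blockSizes (s.foldl (fun t a => .node t (line (a - 1))) t) = blockSizes t ++ s := by
  induction s with
  | nil => intro t _; simp
  | cons a tl ih =>
    intro t hpos
    have ha := hpos a (by simp)
    rw [List.foldl_cons]
    obtain ⟨h1, h2⟩ := ih (.node t (line (a - 1))) (fun b hb => hpos b (by simp [hb]))
    constructor
    · rw [h1]
      show t.size + (line (a - 1)).size + tl.sum = t.size + (a :: tl).sum
      rw [line_size, List.sum_cons]
      omega
    · rw [h2]
      show blockSizes t ++ [(line (a - 1)).size] ++ tl = blockSizes t ++ (a :: tl)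
      rw [line_size, List.append_assoc, List.singleton_append]
      have : a - 1 + 1 = a := by omega
      rw [this]

lemma spec_set (n : ℕ) (hn : 1 ≤ n) :
    {g : (ℕ → A3) → A3 | ∃ t : BTree, t.size = n ∧ g = termOp op3 t} = Phi '' Comp (n - 1) := by
  ext g
  simp only [Set.mem_setOf_eq, Set.mem_image]
  constructor
  · rintro ⟨t, ht, rfl⟩
    refine ⟨blockSizes t, ⟨blockSizes_pos t, ?_⟩, (termOp_eq_Phi t).symm⟩
    have := sum_blockSizes t
    omega
  · rintro ⟨s, ⟨hpos, hsum⟩, rfl⟩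
    refine ⟨s.foldl (fun t a => .node t (line (a - 1))) .leaf, ?_, ?_⟩
    · rw [(build_spec s .leaf hpos).1]
      show 1 + s.sum = n
      omega
    · rw [termOp_eq_Phi, (build_spec s .leaf hpos).2]
      show Phi (([] : List ℕ) ++ s) = Phi s
      rw [List.nil_append]

end AssocSpec8
open AssocSpec in
/-- For the digraph on vertices `{u, v, w}` (here `u = 0`,
`v = 1`, `w = 2`) with edges `{(u,v), (v,v), (u,w), (w,w)}`, the associative
spectrum satisfies `s_n = 2^(n-2)` for all `n ≥ 2`. -/
theorem stmt8 (n : ℕ) (hn : 2 ≤ n) :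
    spectrum (gaOp (fun i j : Fin 3 =>
      (i = 0 ∧ j = 1) ∨ (i = 1 ∧ j = 1) ∨ (i = 0 ∧ j = 2) ∨ (i = 2 ∧ j = 2))) n
      = 2 ^ (n - 2) := by
  show AssocSpec.spectrum AssocSpec8.op3 n = 2 ^ (n - 2)
  unfold AssocSpec.spectrum
  rw [AssocSpec8.spec_set n (by omega),
    Set.ncard_image_of_injOn (AssocSpec8.Phi_injOn (n - 1))]
  obtain ⟨k, rfl⟩ : ∃ k, n = k + 2 := ⟨n - 2, by omega⟩
  rw [show k + 2 - 1 = k + 1 from rfl, show k + 2 - 2 = k from rfl, AssocSpec8.comp_card k]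
end

section
/- Let G be the digraph with vertex set V = {u, v, w} and edge set E = {(u,v), (v,v), (v,w), (w,v), (w,w)}. Then the associative spectrum of the graph algebra A(G) satisfies s_n(A(G)) = 2^{n−2} for all n ≥ 2. -/
namespace Stmt9Aux
open AssocSpec

abbrev E3 : Fin 3 → Fin 3 → Prop := fun i j =>
  (i = 0 ∧ j = 1) ∨ (i = 1 ∧ j = 1) ∨ (i = 1 ∧ j = 2) ∨
  (i = 2 ∧ j = 1) ∨ (i = 2 ∧ j = 2)

noncomputable abbrev op3 : Option (Fin 3) → Option (Fin 3) → Option (Fin 3) :=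
  gaOp E3

lemma op3_none_left (b : Option (Fin 3)) : op3 none b = none := rfl

lemma op3_none_right (a : Option (Fin 3)) : op3 a none = none := by
  cases a <;> rfl

lemma op3_some (x y : Fin 3) :
    op3 (some x) (some y) = if E3 x y then some x else none := by
  simp only [op3, gaOp]
  split_ifs <;> rfl

lemma not_E3_zero : ∀ x : Fin 3, ¬ E3 x 0 := by decide

lemma op3_some_zero (a : Option (Fin 3)) : op3 a (some 0) = none := by
  cases a with
  | none => rfl
  | some x => rw [op3_some, if_neg (not_E3_zero x)]

/-- The sizes of the left subtrees along the leftmost path: the set of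
children of the root in the DFS tree. -/
def cs : BTree → Finset ℕ
  | .leaf => ∅
  | .node l r => cs l ∪ {l.size}

lemma size_pos : ∀ t : BTree, 1 ≤ t.size := by
  intro t
  induction t with
  | leaf => exact le_refl 1
  | node l r ihl ihr => simp only [BTree.size]; omega

lemma cs_bound : ∀ t : BTree, ∀ s ∈ cs t, 1 ≤ s ∧ s < t.size := by
  intro t
  induction t with
  | leaf => intro s hs; simp [cs] at hs
  | node l r ihl ihr =>
    intro s hs
    have hrs := size_pos r
    rcases Finset.mem_union.mp hs with h | h
    · have := ihl s h
      simp only [BTree.size]; omega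
    · have := Finset.mem_singleton.mp h
      subst this
      have := size_pos l
      simp only [BTree.size]; omega

lemma size_eq_one {t : BTree} (h : t.size = 1) : t = .leaf := by
  cases t with
  | leaf => rfl
  | node l r =>
    have hl := size_pos l; have hr := size_pos r
    simp only [BTree.size] at h; omega

lemma one_mem_cs : ∀ t : BTree, 2 ≤ t.size → 1 ∈ cs t := by
  intro t
  induction t with
  | leaf => intro h; simp [BTree.size] at h
  | node l r ihl ihr =>
    intro _
    by_cases hl : l.size = 1
    · exact Finset.mem_union_right _ (by simp [hl])
    · have := size_pos l
      exact Finset.mem_union_left _ (ihl (by omega))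

open Classical in
/-- The condition under which the term operation of a bracketing of size `n`
with root-children set `C` returns `f 0` (rather than `∞ = none`). -/
def Cond (n : ℕ) (C : Finset ℕ) (f : ℕ → Option (Fin 3)) : Prop :=
  (∀ i, 1 ≤ i → i < n → (f i = some 1 ∨ f i = some 2)) ∧
  (f 0 = some 1 ∨ f 0 = some 2 ∨ (f 0 = some 0 ∧ ∀ s ∈ C, f s = some 1))

open Classical in
noncomputable def F (n : ℕ) (C : Finset ℕ) (f : ℕ → Option (Fin 3)) :
    Option (Fin 3) :=
  if Cond n C f then f 0 else none

open Classical in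
lemma eval_key (t : BTree) (f : ℕ → Option (Fin 3)) (k : ℕ) :
    BTree.evalFrom op3 t f k =
      if ((∀ i, 1 ≤ i → i < t.size → (f (k+i) = some 1 ∨ f (k+i) = some 2)) ∧
          (f k = some 1 ∨ f k = some 2 ∨
            (f k = some 0 ∧ ∀ s ∈ cs t, f (k+s) = some 1)))
      then f k else none := by
  induction t generalizing k with
  | leaf =>
    show f k = _
    split_ifs with h
    · rfl
    · rcases hfk : f k with _ | x
      · rfl
      · exfalso
        apply h
        refine ⟨by intro i h1 h2; simp [BTree.size] at h1 h2; omega, ?_⟩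
        fin_cases x <;> simp [hfk, cs]
  | node l r ihl ihr =>
    have hls := size_pos l
    have hrs := size_pos r
    have hsz : (BTree.node l r).size = l.size + r.size := rfl
    have hcs : cs (.node l r) = cs l ∪ {l.size} := rfl
    rw [show BTree.evalFrom op3 (.node l r) f k
        = op3 (BTree.evalFrom op3 l f k) (BTree.evalFrom op3 r f (k + l.size))
        from rfl, ihl, ihr]
    by_cases hP : ((∀ i, 1 ≤ i → i < (BTree.node l r).size →
          (f (k+i) = some 1 ∨ f (k+i) = some 2)) ∧
        (f k = some 1 ∨ f k = some 2 ∨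
          (f k = some 0 ∧ ∀ s ∈ cs (.node l r), f (k+s) = some 1)))
    · rw [if_pos hP]
      obtain ⟨hin, hhd⟩ := hP
      have hmem_l : f (k + l.size) = some 1 ∨ f (k + l.size) = some 2 :=
        hin l.size hls (by rw [hsz]; omega)
      have hPl : (∀ i, 1 ≤ i → i < l.size →
            (f (k+i) = some 1 ∨ f (k+i) = some 2)) ∧
          (f k = some 1 ∨ f k = some 2 ∨
            (f k = some 0 ∧ ∀ s ∈ cs l, f (k+s) = some 1)) := by
        refine ⟨fun i h1 h2 => hin i h1 (by rw [hsz]; omega), ?_⟩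
        rcases hhd with h | h | ⟨h0, hall⟩
        · exact Or.inl h
        · exact Or.inr (Or.inl h)
        · exact Or.inr (Or.inr ⟨h0, fun s hs =>
            hall s (hcs ▸ Finset.mem_union_left _ hs)⟩)
      have hPr : (∀ i, 1 ≤ i → i < r.size →
            (f (k + l.size + i) = some 1 ∨ f (k + l.size + i) = some 2)) ∧
          (f (k + l.size) = some 1 ∨ f (k + l.size) = some 2 ∨
            (f (k + l.size) = some 0 ∧
              ∀ s ∈ cs r, f (k + l.size + s) = some 1)) := by
        refine ⟨fun i h1 h2 => ?_, ?_⟩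
        · have := hin (l.size + i) (by omega) (by rw [hsz]; omega)
          rwa [← add_assoc] at this
        · rcases hmem_l with h | h
          · exact Or.inl h
          · exact Or.inr (Or.inl h)
      rw [if_pos hPl, if_pos hPr]
      rcases hhd with h | h | ⟨h0, hall⟩
      · rcases hmem_l with h' | h' <;>
          rw [h, h', op3_some, if_pos (by decide)]
      · rcases hmem_l with h' | h' <;>
          rw [h, h', op3_some, if_pos (by decide)]
      · have h1 : f (k + l.size) = some 1 :=
          hall l.size (hcs ▸ Finset.mem_union_right _ (Finset.mem_singleton_self _))
        rw [h0, h1, op3_some, if_pos (by decide)]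
    · rw [if_neg hP]
      by_cases hPl : (∀ i, 1 ≤ i → i < l.size →
            (f (k+i) = some 1 ∨ f (k+i) = some 2)) ∧
          (f k = some 1 ∨ f k = some 2 ∨
            (f k = some 0 ∧ ∀ s ∈ cs l, f (k+s) = some 1))
      · by_cases hPr : (∀ i, 1 ≤ i → i < r.size →
              (f (k + l.size + i) = some 1 ∨ f (k + l.size + i) = some 2)) ∧
            (f (k + l.size) = some 1 ∨ f (k + l.size) = some 2 ∨
              (f (k + l.size) = some 0 ∧
                ∀ s ∈ cs r, f (k + l.size + s) = some 1))
        · rw [if_pos hPl, if_pos hPr]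
          -- both subterms evaluate; show the top product is `none`
          rcases hPr.2 with hr1 | hr1 | ⟨hr0, _⟩
          rotate_left 2
          · rw [hr0, op3_some_zero]
          all_goals {
            -- f (k + l.size) is `some 1` or `some 2`;
            -- derive the inner condition for the whole node
            have hin : ∀ i, 1 ≤ i → i < (BTree.node l r).size →
                (f (k+i) = some 1 ∨ f (k+i) = some 2) := by
              intro i h1 h2
              rw [hsz] at h2
              by_cases hil : i < l.size
              · exact hPl.1 i h1 hil
              · by_cases hie : i = l.size
                · subst hie
                  first
                  | exact Or.inl hr1
                  | exact Or.inr hr1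
                · have := hPr.1 (i - l.size) (by omega) (by omega)
                  rw [show k + l.size + (i - l.size) = k + i by omega] at this
                  exact this
            rcases hPl.2 with h | h | ⟨h0, hall⟩
            · exact absurd ⟨hin, Or.inl h⟩ hP
            · exact absurd ⟨hin, Or.inr (Or.inl h)⟩ hP
            · -- f k = some 0 and all of `cs l` maps to 1
              rcases hr1' : f (k + l.size) with _ | x
              · rw [hr1'] at hr1; exact absurd hr1 (by simp)
              have hx : x = 1 ∨ x = 2 := by
                rw [hr1'] at hr1
                first
                | exact Or.inl (Option.some.inj hr1)
                | exact Or.inr (Option.some.inj hr1)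
              rcases hx with hx | hx
              · subst hx
                exfalso
                apply hP
                refine ⟨hin, Or.inr (Or.inr ⟨h0, fun s hs => ?_⟩)⟩
                rw [hcs] at hs
                rcases Finset.mem_union.mp hs with hs | hs
                · exact hall s hs
                · rw [Finset.mem_singleton.mp hs]; exact hr1'
              · subst hx
                rw [h0, op3_some, if_neg (by decide)]
          }
        · rw [if_neg hPr, op3_none_right]
      · rw [if_neg hPl, op3_none_left]

open Classical in
lemma termOp_eq_F (t : BTree) : BTree.termOp op3 t = F t.size (cs t) := by
  funext f
  show BTree.evalFrom op3 t f 0 = _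
  rw [eval_key]
  simp only [zero_add]
  by_cases h : Cond t.size (cs t) f
  · rw [F, if_pos h]
    exact if_pos h
  · rw [F, if_neg h]
    exact if_neg h

/-- A right comb of size `k + 1`. -/
def comb : ℕ → BTree
  | 0 => .leaf
  | k+1 => .node .leaf (comb k)

lemma comb_size (k : ℕ) : (comb k).size = k + 1 := by
  induction k with
  | zero => rfl
  | succ k ih => show 1 + (comb k).size = _; omega

lemma comb_cs (k : ℕ) : cs (comb (k + 1)) = {1} := by
  show cs .leaf ∪ {BTree.size .leaf} = {1}
  simp [cs, BTree.size]

lemma achieve : ∀ k (C : Finset ℕ), C.card ≤ k → 1 ∈ C →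
    (∀ s ∈ C, 1 ≤ s) → ∀ n, 2 ≤ n → (∀ s ∈ C, s < n) →
    ∃ t : BTree, t.size = n ∧ cs t = C := by
  intro k
  induction k with
  | zero =>
    intro C hc h1 _ _ _ _
    exact absurd (Finset.card_pos.mpr ⟨1, h1⟩) (by omega)
  | succ k ih =>
    intro C hc h1 hge n hn hlt
    by_cases hC : C = {1}
    · subst hC
      obtain ⟨m, rfl⟩ : ∃ m, n = m + 2 := ⟨n - 2, by omega⟩
      exact ⟨comb (m + 1), by rw [comb_size], comb_cs m⟩
    · have hne : C.Nonempty := ⟨1, h1⟩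
      set m := C.max' hne with hm
      have hmC : m ∈ C := C.max'_mem hne
      have hm1 : 1 ≤ m := hge m hmC
      have hm2 : 2 ≤ m := by
        rcases Nat.lt_or_ge m 2 with h | h
        · exfalso; apply hC
          apply Finset.eq_singleton_iff_unique_mem.mpr
          refine ⟨h1, fun x hx => ?_⟩
          have := C.le_max' x hx
          have := hge x hx
          omega
        · exact h
      have hmn : m < n := hlt m hmC
      set C' := C.erase m with hC'
      have h1' : 1 ∈ C' := Finset.mem_erase.mpr ⟨by omega, h1⟩
      have hcard : C'.card ≤ k := by
        have h1 : C'.card = C.card - 1 := by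
          rw [hC']; exact Finset.card_erase_of_mem hmC
        have := Finset.card_pos.mpr hne
        omega
      obtain ⟨l, hlsz, hlcs⟩ := ih C' hcard h1'
        (fun s hs => hge s (Finset.mem_of_mem_erase hs)) m hm2
        (fun s hs => by
          have h1 := C.le_max' s (Finset.mem_of_mem_erase hs)
          have h2 := (Finset.mem_erase.mp hs).1
          omega)
      refine ⟨.node l (comb (n - m - 1)), ?_, ?_⟩
      · show l.size + (comb (n - m - 1)).size = n
        rw [hlsz, comb_size]; omega
      · show cs l ∪ {l.size} = C
        rw [hlsz, hlcs, hC']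
        ext x
        simp only [Finset.mem_union, Finset.mem_erase, Finset.mem_singleton]
        constructor
        · rintro (⟨_, hx⟩ | rfl)
          · exact hx
          · exact hmC
        · intro hx
          by_cases hxm : x = m
          · exact Or.inr hxm
          · exact Or.inl ⟨hxm, hx⟩

/-- The distinguishing assignment. -/
noncomputable def dist (s : ℕ) : ℕ → Option (Fin 3) := fun i =>
  if i = 0 then some 0 else if i = s then some 2 else some 1

lemma F_ne {n : ℕ} {C C' : Finset ℕ} (hC' : C' ⊆ Finset.Ico 1 n)
    {s : ℕ} (hs : s ∈ C) (hs' : s ∉ C') (hs1 : 1 ≤ s) :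
    F n C ≠ F n C' := by
  intro h
  have h2 := congrFun h (dist s)
  have hd0 : dist s 0 = some 0 := by simp [dist]
  have hds : dist s s = some 2 := by simp [dist]; omega
  have hCf : ¬ Cond n C (dist s) := by
    rintro ⟨_, h | h | ⟨_, hall⟩⟩
    · rw [hd0] at h; exact absurd (Option.some.inj h) (by decide)
    · rw [hd0] at h; exact absurd (Option.some.inj h) (by decide)
    · have := hall s hs
      rw [hds] at this
      exact absurd (Option.some.inj this) (by decide)
  have hC'f : Cond n C' (dist s) := by
    refine ⟨fun i h1 hi => ?_, Or.inr (Or.inr ⟨hd0, fun x hx => ?_⟩)⟩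
    · by_cases his : i = s
      · subst his; exact Or.inr hds
      · left; unfold dist; rw [if_neg (by omega), if_neg his]
    · have hx1 : 1 ≤ x := (Finset.mem_Ico.mp (hC' hx)).1
      have hxs : x ≠ s := fun he => hs' (he ▸ hx)
      unfold dist; rw [if_neg (by omega), if_neg hxs]
  rw [F, F, if_neg hCf, if_pos hC'f, hd0] at h2
  exact absurd h2 (by simp)

lemma F_injOn {n : ℕ} {C C' : Finset ℕ} (hC : C ⊆ Finset.Ico 1 n)
    (hC' : C' ⊆ Finset.Ico 1 n) (h : F n C = F n C') : C = C' := by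
  by_contra hne
  have hor : ¬(C ⊆ C') ∨ ¬(C' ⊆ C) := by
    by_contra hcon
    push_neg at hcon
    exact hne (Finset.Subset.antisymm hcon.1 hcon.2)
  rcases hor with hsub | hsub
  · obtain ⟨s, hs, hs'⟩ := Finset.not_subset.mp hsub
    exact F_ne hC' hs hs' (Finset.mem_Ico.mp (hC hs)).1 h
  · obtain ⟨s, hs, hs'⟩ := Finset.not_subset.mp hsub
    exact F_ne hC hs hs' (Finset.mem_Ico.mp (hC' hs)).1 h.symm

lemma card_D (n : ℕ) (hn : 2 ≤ n) :
    ((Finset.Ico 1 n).powerset.filter (fun C => 1 ∈ C)).card = 2 ^ (n - 2) := by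
  have himg : (Finset.Ico 1 n).powerset.filter (fun C => 1 ∈ C)
      = (Finset.Ico 2 n).powerset.image (insert 1) := by
    ext C
    simp only [Finset.mem_filter, Finset.mem_powerset, Finset.mem_image]
    constructor
    · rintro ⟨hsub, h1⟩
      refine ⟨C.erase 1, ?_, Finset.insert_erase h1⟩
      intro x hx
      have h2 := Finset.mem_erase.mp hx
      have h3 := Finset.mem_Ico.mp (hsub h2.2)
      exact Finset.mem_Ico.mpr ⟨by omega, h3.2⟩
    · rintro ⟨S, hS, rfl⟩
      refine ⟨?_, Finset.mem_insert_self 1 S⟩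
      intro x hx
      rcases Finset.mem_insert.mp hx with rfl | hx
      · exact Finset.mem_Ico.mpr ⟨le_refl 1, by omega⟩
      · have := Finset.mem_Ico.mp (hS hx)
        exact Finset.mem_Ico.mpr ⟨by omega, this.2⟩
  have hinj : Set.InjOn (insert 1) (((Finset.Ico 2 n).powerset : Finset (Finset ℕ)) : Set (Finset ℕ)) := by
    intro S hS S' hS' he
    simp only [Finset.coe_powerset, Set.mem_preimage, Set.mem_powerset_iff,
      Finset.coe_subset, Finset.mem_coe, Finset.mem_powerset] at hS hS'
    have h1 : (1:ℕ) ∉ S := fun h => by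
      have := Finset.mem_Ico.mp (hS h); omega
    have h1' : (1:ℕ) ∉ S' := fun h => by
      have := Finset.mem_Ico.mp (hS' h); omega
    rw [← Finset.erase_insert h1, ← Finset.erase_insert h1', he]
  rw [himg, Finset.card_image_of_injOn hinj, Finset.card_powerset, Nat.card_Ico]

end Stmt9Aux
open AssocSpec in
/-- For the digraph on vertices `{u, v, w}` (here `u = 0`,
`v = 1`, `w = 2`) with edges `{(u,v), (v,v), (v,w), (w,v), (w,w)}`, the
associative spectrum satisfies `s_n = 2^(n-2)` for all `n ≥ 2`. -/
theorem stmt9 (n : ℕ) (hn : 2 ≤ n) :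
    spectrum (gaOp (fun i j : Fin 3 =>
      (i = 0 ∧ j = 1) ∨ (i = 1 ∧ j = 1) ∨ (i = 1 ∧ j = 2) ∨
      (i = 2 ∧ j = 1) ∨ (i = 2 ∧ j = 2))) n = 2 ^ (n - 2) := by
  classical
  have hset : {g : (ℕ → Option (Fin 3)) → Option (Fin 3) |
      ∃ t : BTree, t.size = n ∧ g = BTree.termOp (gaOp Stmt9Aux.E3) t} =
      (Stmt9Aux.F n) ''
        ↑((Finset.Ico 1 n).powerset.filter (fun C => 1 ∈ C)) := by
    ext g
    simp only [Set.mem_setOf_eq, Set.mem_image, Finset.mem_coe,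
      Finset.mem_filter, Finset.mem_powerset]
    constructor
    · rintro ⟨t, hts, rfl⟩
      refine ⟨Stmt9Aux.cs t, ⟨?_, ?_⟩, ?_⟩
      · intro s hs
        have := Stmt9Aux.cs_bound t s hs
        exact Finset.mem_Ico.mpr ⟨this.1, hts ▸ this.2⟩
      · exact Stmt9Aux.one_mem_cs t (hts ▸ hn)
      · rw [Stmt9Aux.termOp_eq_F, hts]
    · rintro ⟨C, ⟨hsub, h1⟩, rfl⟩
      obtain ⟨t, hts, htcs⟩ := Stmt9Aux.achieve C.card C le_rfl h1
        (fun s hs => (Finset.mem_Ico.mp (hsub hs)).1) n hn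
        (fun s hs => (Finset.mem_Ico.mp (hsub hs)).2)
      exact ⟨t, hts, by rw [Stmt9Aux.termOp_eq_F, hts, htcs]⟩
  have hIOn : Set.InjOn (Stmt9Aux.F n)
      ↑((Finset.Ico 1 n).powerset.filter (fun C => 1 ∈ C)) := by
    intro C hC C' hC' he
    simp only [Finset.mem_coe, Finset.mem_filter, Finset.mem_powerset] at hC hC'
    exact Stmt9Aux.F_injOn hC.1 hC'.1 he
  show Set.ncard {g : (ℕ → Option (Fin 3)) → Option (Fin 3) |
      ∃ t : BTree, t.size = n ∧ g = BTree.termOp (gaOp Stmt9Aux.E3) t}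
      = 2 ^ (n - 2)
  rw [hset, Set.ncard_image_of_injOn hIOn, Set.ncard_coe_finset,
    Stmt9Aux.card_D n hn]
end

section
/- For n ≥ 2, let ∼ be the equivalence relation on the set B_n of bracketings of size n that relates t and t' if and only if d_{G(t)}(x_i) ≡ d_{G(t')}(x_i) (mod 2) for all i ∈ {1,…,n}. Then the number of equivalence classes of ∼ is exactly 2^{n−2}. -/
/-!
The depths of `x₁` and `x₂` are always `0` and `1`, so a class is determined by the parities of
the depths of `x₃, …, xₙ`. Every parity vector occurs: any sequence of `1`s and `2`s following
`0, 1` is the depth sequence of a bracketing, built by attaching each new variable either to the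
root or to the last child of the root. Hence the classes are the fibres of a surjection onto
`(ZMod 2)^(n-2)`.
-/

theorem Function.Surjective.ncard_fibers {α β : Type*} {f : α → β}
    (hf : Function.Surjective f) :
    {C : Set α | ∃ a, C = f ⁻¹' {f a}}.ncard = Nat.card β := by
  have hfibers : {C : Set α | ∃ a, C = f ⁻¹' {f a}} = Set.range (Set.preimage f ∘ singleton) := by
    ext C
    simp only [Set.mem_ofPred_eq, Set.mem_range, Function.comp_apply, hf.exists, eq_comm]
  rw [hfibers, Set.ncard_range_of_injective
    ((Set.preimage_injective.mpr hf).comp Set.singleton_injective)]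

namespace AssocSpec.BTree

theorem length_depths (t : BTree) : t.depths.length = t.size := by
  induction t with
  | leaf => rfl
  | node l r ihl ihr => simp [depths, size, ihl, ihr]

theorem one_le_size (t : BTree) : 1 ≤ t.size := by
  induction t with
  | leaf => rfl
  | node l r ihl _ => exact ihl.trans (Nat.le_add_right _ _)

theorem depth_node_of_lt {l r : BTree} {i : ℕ} (h : i < l.size) :
    (node l r).depth i = l.depth i := by
  rw [depth, depths, List.getD_append _ _ _ _ (by rwa [length_depths]), depth]

theorem depth_node_of_le {l r : BTree} {i : ℕ} (h₁ : l.size ≤ i) (h₂ : i < l.size + r.size) :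
    (node l r).depth i = r.depth (i - l.size) + 1 := by
  have hr : i - l.size < r.depths.length := by rw [length_depths]; omega
  rw [depth, depths, List.getD_append_right _ _ _ _ (by rwa [length_depths]), length_depths,
    List.getD_eq_getElem _ _ (by simpa using hr), List.getElem_map, depth,
    List.getD_eq_getElem _ _ hr]

theorem depth_zero (t : BTree) : t.depth 0 = 0 := by
  induction t with
  | leaf => rfl
  | node l r ihl _ => rw [depth_node_of_lt (one_le_size l), ihl]

theorem depth_one {t : BTree} (ht : 2 ≤ t.size) : t.depth 1 = 1 := by
  induction t with
  | leaf => simp [size] at ht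
  | node l r ihl _ =>
    by_cases hl : 2 ≤ l.size
    · rw [depth_node_of_lt hl, ihl hl]
    · have hl1 : l.size = 1 := by have := one_le_size l; omega
      rw [depth_node_of_le (by omega) (by simp only [size] at ht; omega), hl1, depth_zero]

theorem exists_depths_eq (ds : List ℕ) (hds : ∀ d ∈ ds, d = 1 ∨ d = 2) :
    ∃ t : BTree, t.depths = 0 :: 1 :: ds := by
  suffices ∃ l r : BTree, (node l r).depths = 0 :: 1 :: ds from
    let ⟨l, r, h⟩ := this; ⟨_, h⟩
  induction ds using List.reverseRecOn with
  | nil => exact ⟨leaf, leaf, rfl⟩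
  | append_singleton ds d ih =>
    obtain ⟨l, r, hlr⟩ := ih fun d hd => hds d (by simp [hd])
    rcases hds d (by simp) with rfl | rfl
    · exact ⟨node l r, leaf, by rw [depths, hlr]; rfl⟩
    · refine ⟨l, node r leaf, ?_⟩
      simp only [depths] at hlr ⊢
      simp [← List.append_assoc, hlr]

end AssocSpec.BTree

namespace AssocSpec

open BTree

def depthParities (n : ℕ) (t : BTree) : Fin (n - 2) → ZMod 2 :=
  fun j => (t.depth (j + 2) : ZMod 2)

theorem depthParities_surjective {n : ℕ} (hn : 2 ≤ n) :
    Function.Surjective fun t : {t : BTree // t.size = n} => depthParities n t := by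
  intro v
  obtain ⟨t, ht⟩ := exists_depths_eq (List.ofFn fun j => 2 - (v j).val) (by
    simp only [List.mem_ofFn, forall_exists_index]
    rintro _ j rfl
    have := (v j).val_lt
    omega)
  refine ⟨⟨t, by rw [← length_depths, ht]; simp; omega⟩, funext fun j => ?_⟩
  have hparity : ∀ x : ZMod 2, ((2 - x.val : ℕ) : ZMod 2) = x := by decide
  simp [depthParities, depth, ht, hparity]

theorem modEq_two_iff_depthParities_eq {n : ℕ} (hn : 2 ≤ n) {t t' : BTree}
    (ht : t.size = n) (ht' : t'.size = n) :
    (∀ i < n, t.depth i ≡ t'.depth i [MOD 2]) ↔ depthParities n t' = depthParities n t := by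
  simp only [funext_iff, depthParities, ZMod.natCast_eq_natCast_iff]
  constructor
  · exact fun h j => (h _ (by omega)).symm
  · intro h i hi
    match i with
    | 0 => rw [depth_zero, depth_zero]
    | 1 => rw [depth_one (ht ▸ hn), depth_one (ht' ▸ hn)]
    | j + 2 => exact (h ⟨j, by omega⟩).symm

end AssocSpec

open AssocSpec in
/-- For `n ≥ 2`, the equivalence relation on `B_n` relating
`t` and `t'` iff `d_{G(t)}(x_i) ≡ d_{G(t')}(x_i) (mod 2)` for all `i` has
exactly `2^(n-2)` equivalence classes. -/
theorem stmt10 (n : ℕ) (hn : 2 ≤ n) :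
    Set.ncard {C : Set {t : BTree // t.size = n} |
      ∃ t : {t : BTree // t.size = n},
        C = {t' : {t : BTree // t.size = n} | ∀ i < n,
          (t : BTree).depth i ≡ (t' : BTree).depth i [MOD 2]}} = 2 ^ (n - 2) := by
  have hclasses : ∀ t : {t : BTree // t.size = n},
      {t' : {t : BTree // t.size = n} | ∀ i < n, (t : BTree).depth i ≡ (t' : BTree).depth i [MOD 2]}
        = (fun t : {t : BTree // t.size = n} => depthParities n t) ⁻¹'
          {depthParities n t} := fun t => by
    ext t'
    exact modEq_two_iff_depthParities_eq hn t.2 t'.2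
  simp only [hclasses]
  rw [(depthParities_surjective hn).ncard_fibers, Nat.card_fun, Nat.card_eq_fintype_card,
    ZMod.card, Nat.card_eq_fintype_card, Fintype.card_fin]
end

section
/- For n ≥ 2, call two DFS trees on n vertices leaf-equivalent if they have the same set of leaves (childless vertices). Then the number of leaf-equivalence classes of DFS trees of size n is exactly 2^{n−2}. -/
namespace AssocSpecAux
open AssocSpec

variable {n : ℕ}

lemma parent_le (T : DFSTree n) (x : Fin n) : (T.parent x : ℕ) ≤ x := by
  rcases Nat.eq_zero_or_pos (x : ℕ) with h | h
  · rw [T.parent_root x h]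
  · exact (T.parent_lt x h).le

lemma iterate_le (T : DFSTree n) (a : ℕ) (x : Fin n) :
    (T.parent^[a] x : ℕ) ≤ x := by
  induction a generalizing x with
  | zero => simp
  | succ a ih =>
    rw [Function.iterate_succ_apply]
    exact le_trans (ih _) (parent_le T x)

lemma isLeaf_iff (T : DFSTree n) (i : Fin n) :
    T.IsLeaf i ↔ ((i : ℕ) + 1 = n ∨
      ∀ h : (i : ℕ) + 1 < n, T.parent ⟨(i : ℕ) + 1, h⟩ ≠ i) := by
  constructor
  · intro hl
    rcases eq_or_lt_of_le (Nat.succ_le_of_lt i.2) with h | h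
    · exact Or.inl h
    · refine Or.inr fun h' hpar => ?_
      have h2 := hl _ hpar
      have h3 : (i : ℕ) + 1 = (i : ℕ) := congrArg Fin.val h2
      omega
  · rintro hyp j hj
    by_contra hji
    have hj0 : 0 < (j : ℕ) := by
      rcases Nat.eq_zero_or_pos (j : ℕ) with h | h
      · exact absurd ((T.parent_root j h).symm.trans hj) hji
      · exact h
    have hij : (i : ℕ) < (j : ℕ) := by
      have := T.parent_lt j hj0; rwa [hj] at this
    have hi1 : (i : ℕ) + 1 < n := lt_of_le_of_lt hij j.2
    obtain ⟨a, ha⟩ := T.interval i ⟨(i : ℕ) + 1, hi1⟩ j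
      (by rw [Fin.le_def]; simp) (by rw [Fin.le_def]; simpa using hij)
      ⟨1, by simpa using hj⟩
    rcases a with _ | b
    · have := congrArg Fin.val ha
      simp at this
    · rw [Function.iterate_succ_apply] at ha
      have hple : (T.parent ⟨(i : ℕ) + 1, hi1⟩ : ℕ) ≤ (i : ℕ) := by
        have := T.parent_lt ⟨(i : ℕ) + 1, hi1⟩ (by simp)
        simp at this; omega
      have hge : (i : ℕ) ≤ (T.parent ⟨(i : ℕ) + 1, hi1⟩ : ℕ) := by
        have h4 := iterate_le T b (T.parent ⟨(i : ℕ) + 1, hi1⟩)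
        rw [ha] at h4; exact h4
      have heq : T.parent ⟨(i : ℕ) + 1, hi1⟩ = i := Fin.ext (le_antisymm hple hge)
      rcases hyp with h | h
      · omega
      · exact h hi1 heq

open Classical in
noncomputable def mkParent (S : Set (Fin n)) : Fin n → Fin n := fun j =>
  if h : 0 < (j : ℕ) then
    if (⟨(j : ℕ) - 1, lt_of_le_of_lt (Nat.sub_le _ _) j.2⟩ : Fin n) ∈ S then
      ⟨0, j.pos⟩
    else ⟨(j : ℕ) - 1, lt_of_le_of_lt (Nat.sub_le _ _) j.2⟩
  else j

lemma mkParent_zero (S : Set (Fin n)) (j : Fin n) (h : (j : ℕ) = 0) :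
    mkParent S j = j := by
  simp [mkParent, h]

lemma mkParent_lt (S : Set (Fin n)) (j : Fin n) (h : 0 < (j : ℕ)) :
    (mkParent S j : ℕ) < j := by
  rw [mkParent, dif_pos h]
  split <;> simp <;> omega

lemma mkParent_val (S : Set (Fin n)) (j : Fin n) :
    (mkParent S j : ℕ) = 0 ∨ (mkParent S j : ℕ) = (j : ℕ) - 1 := by
  rw [mkParent]
  split
  · split <;> simp
  · rename_i h
    left; omega

lemma mkParent_fix (S : Set (Fin n)) (a : ℕ) (j : Fin n) (h : (j : ℕ) = 0) :
    (mkParent S)^[a] j = j := by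
  induction a with
  | zero => rfl
  | succ a ih => rw [Function.iterate_succ_apply, mkParent_zero S j h, ih]

lemma mkParent_reach_zero (S : Set (Fin n)) (i : Fin n) (hi : (i : ℕ) = 0)
    (j : Fin n) : ∃ a, (mkParent S)^[a] j = i := by
  obtain ⟨m, hm⟩ : ∃ m, (j : ℕ) ≤ m := ⟨j, le_refl _⟩
  induction m generalizing j with
  | zero =>
    refine ⟨0, Fin.ext ?_⟩
    simp only [Function.iterate_zero_apply]
    omega
  | succ m ih =>
    rcases Nat.eq_zero_or_pos (j : ℕ) with h | h
    · refine ⟨0, Fin.ext ?_⟩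
      simp only [Function.iterate_zero_apply]
      omega
    · obtain ⟨a, ha⟩ := ih (mkParent S j) (by have := mkParent_lt S j h; omega)
      exact ⟨a + 1, by rw [Function.iterate_succ_apply, ha]⟩

lemma mkParent_interval (S : Set (Fin n)) (a : ℕ) :
    ∀ i j k : Fin n, i ≤ j → j ≤ k → (mkParent S)^[a] k = i →
      ∃ b, (mkParent S)^[b] j = i := by
  induction a with
  | zero =>
    intro i j k hij hjk hk
    simp only [Function.iterate_zero_apply] at hk
    subst hk
    exact ⟨0, le_antisymm hjk hij⟩
  | succ a ih =>
    intro i j k hij hjk hk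
    rcases Nat.eq_zero_or_pos (i : ℕ) with hi0 | hi0
    · exact mkParent_reach_zero S i hi0 j
    · rcases eq_or_lt_of_le hjk with heq | hlt
      · exact ⟨a + 1, heq ▸ hk⟩
      · rw [Function.iterate_succ_apply] at hk
        rcases mkParent_val S k with h0 | hv
        · exfalso
          have hfix := mkParent_fix S a (mkParent S k) h0
          rw [hfix] at hk
          rw [hk] at h0
          omega
        · refine ih i j (mkParent S k) hij ?_ hk
          rw [Fin.le_def, hv]
          have h1 : (j : ℕ) < (k : ℕ) := hlt
          omega

noncomputable def mkTree (S : Set (Fin n)) : DFSTree n where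
  parent := mkParent S
  parent_lt := fun i h => mkParent_lt S i h
  parent_root := fun i h => mkParent_zero S i h
  interval := fun i j k hij hjk h => by
    obtain ⟨a, ha⟩ := h
    exact mkParent_interval S a i j k hij hjk ha

lemma mkTree_parent (S : Set (Fin n)) : (mkTree S).parent = mkParent S := rfl

open Classical in
lemma mkParent_succ (S : Set (Fin n)) (i : Fin n) (h : (i : ℕ) + 1 < n) :
    mkParent S ⟨(i : ℕ) + 1, h⟩ = if i ∈ S then ⟨0, i.pos⟩ else i := by
  rw [mkParent, dif_pos (by simp)]
  simp

lemma mkTree_leaves (S : Set (Fin n)) (hn : 2 ≤ n)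
    (h0 : ∀ i ∈ S, (i : ℕ) ≠ 0) (hlast : ∀ i : Fin n, (i : ℕ) = n - 1 → i ∈ S) :
    {i | (mkTree S).IsLeaf i} = S := by
  ext i
  rw [Set.mem_setOf_eq, isLeaf_iff]
  constructor
  · rintro (h | h)
    · exact hlast i (by omega)
    · by_contra hiS
      have h1 : (i : ℕ) + 1 < n := by
        have : (i : ℕ) ≠ n - 1 := fun hv => hiS (hlast i hv)
        have := i.2; omega
      refine h h1 ?_
      rw [mkTree_parent, mkParent_succ S i h1, if_neg hiS]
  · intro hiS
    by_cases h1 : (i : ℕ) + 1 = n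
    · exact Or.inl h1
    · refine Or.inr fun h => ?_
      rw [mkTree_parent, mkParent_succ S i h, if_pos hiS]
      intro heq
      have hv := congrArg Fin.val heq
      exact h0 i hiS (by rw [← hv])

lemma leaves_mem (T : DFSTree n) (hn : 2 ≤ n) :
    (∀ i : Fin n, T.IsLeaf i → (i : ℕ) ≠ 0) ∧
    (∀ i : Fin n, (i : ℕ) = n - 1 → T.IsLeaf i) := by
  constructor
  · intro i hi h0
    rw [isLeaf_iff] at hi
    rcases hi with h | h
    · omega
    · have h1 : (i : ℕ) + 1 < n := by omega
      refine h h1 ?_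
      apply Fin.ext
      have hp := T.parent_lt ⟨(i : ℕ) + 1, h1⟩ (by simp)
      simp at hp ⊢
      omega
  · intro i hival
    rw [isLeaf_iff]
    left
    have := i.2
    omega

end AssocSpecAux

open AssocSpec in
/-- For `n ≥ 2`, the number of leaf-equivalence classes of
DFS trees of size `n` (two DFS trees being equivalent iff they have the same
set of leaves) is exactly `2^(n-2)`. -/
theorem stmt12 (n : ℕ) (hn : 2 ≤ n) :
    Set.ncard {S : Set (Fin n) | ∃ T : DFSTree n, S = {i | T.IsLeaf i}}
      = 2 ^ (n - 2) := by
  classical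
  set z : Fin n := ⟨0, by omega⟩ with hzdef
  set l : Fin n := ⟨n - 1, by omega⟩ with hldef
  have hzl : z ≠ l := by
    intro h
    have := congrArg Fin.val h
    simp [hzdef, hldef] at this
    omega
  have hE : {S : Set (Fin n) | ∃ T : DFSTree n, S = {i | T.IsLeaf i}} =
      {S : Set (Fin n) | z ∉ S ∧ l ∈ S} := by
    ext S
    simp only [Set.mem_setOf_eq]
    constructor
    · rintro ⟨T, rfl⟩
      obtain ⟨h0, hl⟩ := AssocSpecAux.leaves_mem T hn
      exact ⟨fun hz => h0 z hz rfl, hl l rfl⟩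
    · rintro ⟨hz, hl⟩
      refine ⟨AssocSpecAux.mkTree S, ?_⟩
      rw [AssocSpecAux.mkTree_leaves S hn ?_ ?_]
      · intro i hi hval
        have hi' : i = z := Fin.ext hval
        exact hz (hi' ▸ hi)
      · intro i hval
        have hi' : i = l := Fin.ext hval
        rw [hi']
        exact hl
  rw [hE]
  set f : Set {i : Fin n // i ≠ z ∧ i ≠ l} → Set (Fin n) :=
    fun A => Subtype.val '' A ∪ {l} with hfdef
  have hmem : ∀ (A) (i : {i : Fin n // i ≠ z ∧ i ≠ l}), (i : Fin n) ∈ f A ↔ i ∈ A := by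
    intro A i
    simp only [hfdef, Set.mem_union, Set.mem_singleton_iff, Set.mem_image]
    constructor
    · rintro (⟨a, ha, hav⟩ | h)
      · rwa [Subtype.ext hav] at ha
      · exact absurd h i.2.2
    · intro h
      exact Or.inl ⟨i, h, rfl⟩
  have hinj : Function.Injective f := by
    intro A B h
    ext i
    rw [← hmem A i, ← hmem B i, h]
  have hrange : {S : Set (Fin n) | z ∉ S ∧ l ∈ S} = Set.range f := by
    ext S
    simp only [Set.mem_setOf_eq, Set.mem_range]
    constructor
    · rintro ⟨hz, hl⟩
      refine ⟨{i | (i : Fin n) ∈ S}, ?_⟩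
      ext x
      simp only [hfdef, Set.mem_union, Set.mem_image, Set.mem_setOf_eq,
        Set.mem_singleton_iff]
      constructor
      · rintro (⟨a, ha, rfl⟩ | rfl)
        · exact ha
        · exact hl
      · intro hx
        by_cases hxl : x = l
        · exact Or.inr hxl
        · have hxz : x ≠ z := fun h => hz (h ▸ hx)
          exact Or.inl ⟨⟨x, hxz, hxl⟩, hx, rfl⟩
    · rintro ⟨A, rfl⟩
      refine ⟨?_, Or.inr rfl⟩
      intro hzmem
      rcases hzmem with hzmem | hzmem
      · obtain ⟨a, _, hav⟩ := hzmem
        exact a.2.1 hav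
      · exact hzl hzmem
  rw [hrange, ← Set.image_univ, Set.ncard_image_of_injective _ hinj,
    Set.ncard_univ, Nat.card_eq_fintype_card, Fintype.card_set]
  congr 1
  rw [Fintype.card_subtype]
  have hfilter : (Finset.univ.filter fun i : Fin n => i ≠ z ∧ i ≠ l) =
      Finset.univ \ {z, l} := by
    ext i
    simp only [Finset.mem_filter, Finset.mem_sdiff, Finset.mem_univ, true_and,
      Finset.mem_insert, Finset.mem_singleton]
    tauto
  rw [hfilter, Finset.card_sdiff_of_subset (by simp), Finset.card_pair hzl,
    Finset.card_univ, Fintype.card_fin]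
end

section
/- Let K be an undirected connected graph with no loops such that for all vertices a, b, c, d of K, if a → b → c → d is a walk in K then (a,d) is an edge of K. Then K is complete bipartite, i.e., its vertex set splits into two parts B_1, B_2 with (x,y) an edge exactly when x and y lie in different parts. -/
/-
The hypothesis says that an edge preceded or followed by a walk of even length is again an edge.
Fix a vertex `a`. By connectivity every vertex is reached from `a` by an even walk or by an edge
followed by an even walk, so every non-neighbour of `a` is at even distance from `a`. Take `B₁` to
be the non-neighbours and `B₂` the neighbours of `a`. An even walk from `a` to `x ∈ B₁` followed by
an edge `x y` puts `y` in `B₂`; an edge inside `B₂` would give a walk `a → x → y → a` and hence a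
loop at `a`; and an even walk from `x ∈ B₁` through `a` to `y ∈ B₂` gives the edge `x y`.
-/

namespace AssocSpec

variable {V : Type*} {E : V → V → Prop}

def EvenReach (E : V → V → Prop) : V → V → Prop :=
  Relation.ReflTransGen (Relation.Comp E E)

theorem EvenReach.symm (hsymm : ∀ u v, E u v → E v u) {x y : V} (h : EvenReach E x y) :
    EvenReach E y x :=
  have : Std.Symm (Relation.Comp E E) :=
    ⟨fun _ _ ⟨w, hw₁, hw₂⟩ => ⟨w, hsymm _ _ hw₂, hsymm _ _ hw₁⟩⟩
  show Relation.ReflTransGen _ y x from Std.Symm.symm _ _ h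

theorem Reach.evenReach_or_adj_evenReach {x y : V} (h : Reach E x y) :
    EvenReach E x y ∨ ∃ z, E x z ∧ EvenReach E z y := by
  induction h using Relation.ReflTransGen.head_induction_on with
  | refl => exact Or.inl Relation.ReflTransGen.refl
  | head hxc _ ih =>
    rcases ih with hcy | ⟨z, hcz, hzy⟩
    · exact Or.inr ⟨_, hxc, hcy⟩
    · exact Or.inl (Relation.ReflTransGen.head ⟨_, hxc, hcz⟩ hzy)

section ShortWalks

variable (hshort : ∀ a b c d : V, E a b → E b c → E c d → E a d)
include hshort

theorem adj_of_evenReach_of_adj {x z y : V} (hxz : EvenReach E x z) (hzy : E z y) : E x y := by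
  induction hxz using Relation.ReflTransGen.head_induction_on with
  | refl => exact hzy
  | head hstep _ ih =>
    obtain ⟨w, h₁, h₂⟩ := hstep
    exact hshort _ _ _ _ h₁ h₂ ih

theorem adj_of_adj_of_evenReach {x z y : V} (hxz : E x z) (hzy : EvenReach E z y) : E x y := by
  induction hzy with
  | refl => exact hxz
  | tail _ hstep ih =>
    obtain ⟨w, h₁, h₂⟩ := hstep
    exact hshort _ _ _ _ ih h₁ h₂

theorem evenReach_of_not_adj (hconn : ∀ u v : V, Reach E u v) {a x : V} (hax : ¬ E a x) :
    EvenReach E a x := by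
  rcases (hconn a x).evenReach_or_adj_evenReach with h | ⟨z, haz, hzx⟩
  · exact h
  · exact absurd (adj_of_adj_of_evenReach hshort haz hzx) hax

end ShortWalks

end AssocSpec

open AssocSpec in
/-- A connected loopless undirected graph `K` in which
`a → b → c → d` being a walk implies that `(a,d)` is an edge is complete
bipartite. -/
theorem stmt13 {V : Type*} [Nonempty V] (E : V → V → Prop)
    (hsymm : ∀ u v, E u v → E v u)
    (hconn : ∀ u v : V, Reach E u v)
    (hloopless : ∀ v : V, ¬ E v v)
    (hshort : ∀ a b c d : V, E a b → E b c → E c d → E a d) :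
    ∃ B1 B2 : Set V, B1 ∪ B2 = Set.univ ∧ B1 ∩ B2 = ∅ ∧
      ∀ x y : V, E x y ↔ (x ∈ B1 ∧ y ∈ B2) ∨ (x ∈ B2 ∧ y ∈ B1) := by
  obtain ⟨a⟩ := ‹Nonempty V›
  have heven : ∀ x, ¬ E a x → EvenReach E a x := fun x => evenReach_of_not_adj hshort hconn
  refine ⟨{x | ¬ E a x}, {x | E a x}, ?_, ?_, fun x y => ⟨fun hxy => ?_, ?_⟩⟩
  · ext x; simp [em']
  · ext x; simp
  · by_cases hax : E a x
    · exact Or.inr ⟨hax, fun hay => hloopless a (hshort _ _ _ _ hax hxy (hsymm _ _ hay))⟩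
    · exact Or.inl ⟨hax, adj_of_evenReach_of_adj hshort (heven x hax) hxy⟩
  · rintro (⟨hax, hay⟩ | ⟨hax, hay⟩)
    · exact adj_of_evenReach_of_adj hshort ((heven x hax).symm hsymm) hay
    · exact adj_of_adj_of_evenReach hshort (hsymm _ _ hax) (heven y hay)
end
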